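/- If a permutation π of [n] avoids 321, 2413 and 3142, then either π = id_r ⊕ π' for some 1 ≤ r ≤ n with π' avoiding these three patterns, or π = (id_{r1} ⊖ id_{r2}) ⊕ π'' with r1, r2 ≥ 1, r1 + r2 ≤ n, and π'' avoiding these three patterns. -/

import Mathlib

/-!
Write `π = P ++ 1 :: S`. If `P` is empty, `π = id₁ ⊕ π'`. Otherwise `P` is increasing, since a
descent in front of the `1` would be a `321`, and `P` is an interval `[a, b]`: a missing value `v`
would lie in `S`, and `a b 1 v` would be a `2413`. In `S` the values below `a` precede those above
it, since `a 1 x y` with `y < a < x` would be a `3142`, and they increase (again `321`), so they are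
exactly `2, …, a - 1`. Hence `π` starts with `[a, …, b] ++ [1, …, a - 1] = id ⊖ id`, and the rest of
`π` is then a permutation of the remaining (larger) values.
-/

/-- `π` is (the one-line notation of) a permutation of `{1,…,n}`. -/
def IsPermList (n : ℕ) (π : List ℕ) : Prop := π.Perm (List.range' 1 n)

/-- Two sequences are order-isomorphic. -/
def OrdIso (u v : List ℕ) : Prop :=
  u.length = v.length ∧
    ∀ i j : ℕ, i < u.length → j < u.length → (u[i]! < u[j]! ↔ v[i]! < v[j]!)

/-- `π` contains the pattern `σ`: some subsequence of `π` is order-isomorphic to `σ`. -/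
def ContainsPat (π σ : List ℕ) : Prop := ∃ t : List ℕ, t.Sublist π ∧ OrdIso t σ

/-- `π` avoids the pattern `σ`. -/
def AvoidsPat (π σ : List ℕ) : Prop := ¬ ContainsPat π σ

/-- Direct sum of permutations in one-line notation. -/
def dsumL (x y : List ℕ) : List ℕ := x ++ y.map (· + x.length)

/-- Skew sum of permutations in one-line notation. -/
def ssumL (x y : List ℕ) : List ℕ := x.map (· + y.length) ++ y

/-- The identity permutation of size `r` in one-line notation. -/
def idL (r : ℕ) : List ℕ := List.range' 1 r

/-- `π` avoids all of the patterns 321, 2413 and 3142. -/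
def AvoidsAll (π : List ℕ) : Prop :=
  AvoidsPat π [3, 2, 1] ∧ AvoidsPat π [2, 4, 1, 3] ∧ AvoidsPat π [3, 1, 4, 2]

open List

lemma containsPat_321 {π : List ℕ} {x y z : ℕ} (h : [x, y, z] <+ π) (hzy : z < y) (hyx : y < x) :
    ContainsPat π [3, 2, 1] :=
  ⟨_, h, rfl, fun i j hi hj => by
    simp only [length_cons, length_nil] at hi hj
    interval_cases i <;> interval_cases j <;> simp <;> omega⟩

lemma containsPat_2413 {π : List ℕ} {a b c d : ℕ} (h : [b, d, a, c] <+ π) (hab : a < b)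
    (hbc : b < c) (hcd : c < d) : ContainsPat π [2, 4, 1, 3] :=
  ⟨_, h, rfl, fun i j hi hj => by
    simp only [length_cons, length_nil] at hi hj
    interval_cases i <;> interval_cases j <;> simp <;> omega⟩

lemma containsPat_3142 {π : List ℕ} {a b c d : ℕ} (h : [c, a, d, b] <+ π) (hab : a < b)
    (hbc : b < c) (hcd : c < d) : ContainsPat π [3, 1, 4, 2] :=
  ⟨_, h, rfl, fun i j hi hj => by
    simp only [length_cons, length_nil] at hi hj
    interval_cases i <;> interval_cases j <;> simp <;> omega⟩

lemma OrdIso.of_map_sub {t σ : List ℕ} {c : ℕ} (hc : ∀ x ∈ t, c ≤ x)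
    (h : OrdIso (t.map (· - c)) σ) : OrdIso t σ := by
  obtain ⟨hlen, hiso⟩ := h
  rw [length_map] at hlen hiso
  refine ⟨hlen, fun i j hi hj => ?_⟩
  have hci := hc _ (getElem_mem hi)
  have hcj := hc _ (getElem_mem hj)
  have := hiso i j hi hj
  simp only [getElem!_eq_getElem?_getD, getElem?_map, getElem?_eq_getElem hi,
    getElem?_eq_getElem hj, Option.map_some, Option.getD_some] at this ⊢
  omega

lemma AvoidsPat.map_sub_of_sublist {π s σ : List ℕ} {c : ℕ} (h : AvoidsPat π σ) (hs : s <+ π)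
    (hc : ∀ x ∈ s, c ≤ x) : AvoidsPat (s.map (· - c)) σ := by
  rintro ⟨t', ht', hiso⟩
  obtain ⟨t, hts, rfl⟩ := sublist_map_iff.1 ht'
  exact h ⟨t, hts.trans hs, hiso.of_map_sub fun x hx => hc x (hts.subset hx)⟩

lemma AvoidsAll.map_sub_of_sublist {π s : List ℕ} {c : ℕ} (h : AvoidsAll π) (hs : s <+ π)
    (hc : ∀ x ∈ s, c ≤ x) : AvoidsAll (s.map (· - c)) :=
  ⟨h.1.map_sub_of_sublist hs hc, h.2.1.map_sub_of_sublist hs hc, h.2.2.map_sub_of_sublist hs hc⟩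

lemma List.Nodup.pairwise_lt_of_forall_pair_sublist {L : List ℕ} (hL : L.Nodup)
    (h : ∀ x y, [x, y] <+ L → ¬ y < x) : L.Pairwise (· < ·) :=
  pairwise_iff_forall_sublist.2 fun hxy =>
    lt_of_le_of_ne (not_lt.1 (h _ _ hxy)) (pairwise_iff_forall_sublist.1 hL hxy)

lemma pairwise_lt_of_avoids321_of_append_sublist {π L : List ℕ} {z : ℕ}
    (h : AvoidsPat π [3, 2, 1]) (hL : L ++ [z] <+ π) (hnd : L.Nodup) (hz : ∀ x ∈ L, z < x) :
    L.Pairwise (· < ·) :=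
  hnd.pairwise_lt_of_forall_pair_sublist fun _ _ hxy hyx =>
    h (containsPat_321 ((hxy.append (Sublist.refl [z])).trans hL) (hz _ (hxy.subset (by simp))) hyx)

lemma pairwise_lt_of_avoids321_of_cons_sublist {π L : List ℕ} {z : ℕ}
    (h : AvoidsPat π [3, 2, 1]) (hL : z :: L <+ π) (hnd : L.Nodup) (hz : ∀ x ∈ L, x < z) :
    L.Pairwise (· < ·) :=
  hnd.pairwise_lt_of_forall_pair_sublist fun _ _ hxy hyx =>
    h (containsPat_321 (hxy.cons_cons z |>.trans hL) hyx (hz _ (hxy.subset (by simp))))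

lemma List.exists_eq_append_of_forall_or {α : Type*} {p q : α → Prop} :
    ∀ {S : List α}, (∀ x ∈ S, p x ∨ q x) → (∀ x y, [x, y] <+ S → q x → ¬ p y) →
      ∃ S₁ S₂, S = S₁ ++ S₂ ∧ (∀ x ∈ S₁, p x) ∧ ∀ x ∈ S₂, q x
  | [], _, _ => ⟨[], [], rfl, by simp, by simp⟩
  | c :: S, hpq, hqp => by
    by_cases hc : p c
    · obtain ⟨S₁, S₂, rfl, h₁, h₂⟩ := exists_eq_append_of_forall_or
        (fun x hx => hpq x (mem_cons_of_mem c hx)) fun x y hxy => hqp x y (hxy.cons c)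
      exact ⟨c :: S₁, S₂, rfl, forall_mem_cons.2 ⟨hc, h₁⟩, h₂⟩
    · have hqc : q c := (hpq c mem_cons_self).resolve_left hc
      refine ⟨[], c :: S, rfl, by simp, forall_mem_cons.2 ⟨hqc, fun x hx => ?_⟩⟩
      exact (hpq x (mem_cons_of_mem c hx)).resolve_left
        (hqp c x ((singleton_sublist.2 hx).cons_cons c) hqc)

lemma IsPermList.length {n : ℕ} {π : List ℕ} (h : IsPermList n π) : π.length = n := by
  rw [h.length_eq, length_range']

lemma IsPermList.nodup {n : ℕ} {π : List ℕ} (h : IsPermList n π) : π.Nodup :=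
  h.nodup_iff.2 nodup_range'

lemma IsPermList.mem_iff {n v : ℕ} {π : List ℕ} (h : IsPermList n π) :
    v ∈ π ↔ 1 ≤ v ∧ v < 1 + n := by
  rw [List.Perm.mem_iff h, mem_range'_1]

lemma ssumL_idL (r₁ r₂ : ℕ) :
    ssumL (idL r₁) (idL r₂) = range' (1 + r₂) r₁ ++ range' 1 r₂ := by
  rw [ssumL, idL, idL, length_range', add_comm, ← map_add_range']
  simp only [add_comm r₂]

lemma isPermList_ssumL_idL (r₁ r₂ : ℕ) : IsPermList (r₁ + r₂) (ssumL (idL r₁) (idL r₂)) := by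
  rw [ssumL_idL, IsPermList, add_comm r₁, ← range'_append_1]
  exact perm_append_comm

lemma IsPermList.le_of_append {n m : ℕ} {A B : List ℕ} (h : IsPermList n (A ++ B))
    (hA : IsPermList m A) : m ≤ n := by
  rw [← h.length, ← hA.length, length_append]
  exact Nat.le_add_right _ _

lemma IsPermList.perm_range'_of_append {n m : ℕ} {A B : List ℕ} (h : IsPermList n (A ++ B))
    (hA : IsPermList m A) : B.Perm (range' (1 + m) (n - m)) := by
  have hmn := h.le_of_append hA
  rw [IsPermList, ← Nat.add_sub_cancel' hmn, ← range'_append_1] at h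
  exact (perm_append_left_iff A).1 (h.trans (hA.symm.append_right _))

lemma IsPermList.dsumL_decomposition {n m : ℕ} {A B : List ℕ} (h : IsPermList n (A ++ B))
    (hA : IsPermList m A) (hav : AvoidsAll (A ++ B)) :
    m ≤ n ∧ IsPermList (n - m) (B.map (· - m)) ∧ AvoidsAll (B.map (· - m)) ∧
      A ++ B = dsumL A (B.map (· - m)) := by
  have hB := h.perm_range'_of_append hA
  have hmB : ∀ x ∈ B, m < x := fun x hx => by
    have := hB.mem_iff.1 hx
    rw [mem_range'_1] at this
    omega
  refine ⟨h.le_of_append hA, ?_, hav.map_sub_of_sublist (sublist_append_right A B)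
    fun x hx => (hmB x hx).le, ?_⟩
  · simpa only [IsPermList, map_sub_range' (Nat.le_add_left m 1), Nat.add_sub_cancel]
      using hB.map (· - m)
  · rw [dsumL, hA.length, map_map]
    conv_lhs => rw [← map_id B]
    exact congrArg _ (map_congr_left fun x hx => by have := hmB x hx; simp; omega)

lemma IsPermList.one_lt_of_mem {n x : ℕ} {L R : List ℕ} (hπ : IsPermList n (L ++ 1 :: R))
    (hx : x ∈ L ++ R) : 1 < x := by
  obtain ⟨h1, -⟩ := nodup_cons.1 (nodup_middle.1 hπ.nodup)
  have := hπ.mem_iff.1 (perm_middle.mem_iff.2 (mem_cons_of_mem 1 hx))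
  have : x ≠ 1 := by rintro rfl; exact h1 hx
  omega

lemma IsPermList.mem_or_mem_of_two_le {n v : ℕ} {L R : List ℕ} (hπ : IsPermList n (L ++ 1 :: R))
    (h2 : 2 ≤ v) (hvn : v ≤ n) : v ∈ L ∨ v ∈ R := by
  rcases mem_append.1 (hπ.mem_iff (v := v) |>.2 ⟨by omega, by omega⟩) with h | h
  · exact .inl h
  · exact .inr ((mem_cons.1 h).resolve_left (by omega))

lemma exists_eq_range'_of_avoids321_of_avoids2413 {n a : ℕ} {P S : List ℕ}
    (hπ : IsPermList n (a :: P ++ 1 :: S)) (h321 : AvoidsPat (a :: P ++ 1 :: S) [3, 2, 1])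
    (h2413 : AvoidsPat (a :: P ++ 1 :: S) [2, 4, 1, 3]) : ∃ k, a :: P = range' a k := by
  obtain ⟨hPnd, -, hdisj⟩ := nodup_append.1 hπ.nodup
  have hPinc : (a :: P).Pairwise (· < ·) :=
    pairwise_lt_of_avoids321_of_append_sublist h321
      ((Sublist.refl (a :: P)).append ((nil_sublist S).cons_cons 1)) hPnd
      fun x hx => hπ.one_lt_of_mem (mem_append_left _ hx)
  set b := (a :: P).getLast (cons_ne_nil a P)
  have hbP : b ∈ a :: P := getLast_mem _
  have hb : ∀ x ∈ a :: P, x ≤ b := fun _ hx => (hPinc.imp le_of_lt).rel_getLast hx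
  have ha : ∀ x ∈ a :: P, a ≤ x := fun _ hx => (hPinc.imp le_of_lt).rel_head hx
  have ha1 := hπ.one_lt_of_mem (mem_append_left _ mem_cons_self)
  have hgap : ∀ v ∈ S, a ≤ v → v ≤ b → False := fun v hv hav hvb => by
    have hva : a < v := lt_of_le_of_ne hav (hdisj a mem_cons_self v (mem_cons_of_mem 1 hv))
    have hvb : v < b := lt_of_le_of_ne hvb (hdisj b hbP v (mem_cons_of_mem 1 hv)).symm
    have hbP' : b ∈ P := (mem_cons.1 hbP).resolve_left (by omega)
    exact h2413 (containsPat_2413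
      (((singleton_sublist.2 hbP').append ((singleton_sublist.2 hv).cons_cons 1)).cons_cons a)
      ha1 hva hvb)
  refine ⟨b + 1 - a, hPinc.eq_of_mem_iff pairwise_lt_range' fun v => ?_⟩
  have hbn := (hπ.mem_iff.1 (mem_append_left _ hbP)).2
  rw [mem_range'_1]
  refine ⟨fun hv => ⟨ha v hv, by have := hb v hv; omega⟩, fun hv => ?_⟩
  exact (hπ.mem_or_mem_of_two_le (v := v) (by omega) (by omega)).resolve_right
    fun hvS => hgap v hvS hv.1 (by omega)

lemma exists_range'_prefix_of_avoids321_of_avoids3142 {n a : ℕ} {P S : List ℕ}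
    (hπ : IsPermList n (a :: P ++ 1 :: S)) (h321 : AvoidsPat (a :: P ++ 1 :: S) [3, 2, 1])
    (h3142 : AvoidsPat (a :: P ++ 1 :: S) [3, 1, 4, 2]) (hP : ∀ x ∈ P, a ≤ x) :
    ∃ S₂, 1 :: S = range' 1 (a - 1) ++ S₂ := by
  obtain ⟨-, -, hdisj⟩ := nodup_append.1 hπ.nodup
  have hS : ∀ v ∈ S, v < a ∨ a < v := fun v hv =>
    Nat.lt_or_gt_of_ne (hdisj a mem_cons_self v (mem_cons_of_mem 1 hv)).symm
  obtain ⟨S₁, S₂, rfl, hS₁, hS₂⟩ := exists_eq_append_of_forall_or hS fun x y hxy hax hya =>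
    h3142 (containsPat_3142 (((hxy.cons_cons 1).trans (sublist_append_right P _)).cons_cons a)
      (hπ.one_lt_of_mem (mem_append_right _ (hxy.subset (by simp)))) hya hax)
  have hS₁inc : S₁.Pairwise (· < ·) :=
    pairwise_lt_of_avoids321_of_cons_sublist h321
      ((((sublist_append_left S₁ S₂).cons 1).trans (sublist_append_right P _)).cons_cons a)
      (hπ.nodup.sublist (((sublist_append_left S₁ S₂).cons 1).trans
        ((sublist_append_right P _).cons a))) hS₁
  have hgt1 : ∀ x ∈ S₁, 1 < x := fun x hx => hπ.one_lt_of_mem (by simp [hx])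
  refine ⟨S₂, congrArg (· ++ S₂) ((pairwise_cons.2 ⟨hgt1, hS₁inc⟩).eq_of_mem_iff
    pairwise_lt_range' fun v => ?_)⟩
  have ha1 := hπ.one_lt_of_mem (mem_append_left _ mem_cons_self)
  have han := (hπ.mem_iff.1 (mem_cons_self (a := a))).2
  rw [mem_range'_1, mem_cons]
  constructor
  · rintro (rfl | hv)
    · omega
    · have := hgt1 v hv; have := hS₁ v hv; omega
  · intro hv
    by_cases hv1 : v = 1
    · exact .inl hv1
    · rcases hπ.mem_or_mem_of_two_le (v := v) (by omega) (by omega) with hvP | hvS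
      · have := (mem_cons.1 hvP).elim ge_of_eq (hP v); omega
      · exact .inr ((mem_append.1 hvS).resolve_right fun hv₂ => by have := hS₂ v hv₂; omega)

lemma exists_ssumL_prefix {n a : ℕ} {P S : List ℕ} (hπ : IsPermList n (a :: P ++ 1 :: S))
    (hav : AvoidsAll (a :: P ++ 1 :: S)) :
    ∃ r₁ r₂ B, 1 ≤ r₁ ∧ 1 ≤ r₂ ∧ a :: P ++ 1 :: S = ssumL (idL r₁) (idL r₂) ++ B := by
  obtain ⟨k, hP⟩ := exists_eq_range'_of_avoids321_of_avoids2413 hπ hav.1 hav.2.1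
  have ha : ∀ x ∈ P, a ≤ x := fun x hx => (mem_range'_1.1 (hP ▸ mem_cons_of_mem a hx)).1
  obtain ⟨B, hB⟩ := exists_range'_prefix_of_avoids321_of_avoids3142 hπ hav.1 hav.2.2 ha
  have ha1 := hπ.one_lt_of_mem (mem_append_left _ mem_cons_self)
  have hk : P.length + 1 = k := by simpa using congrArg length hP
  refine ⟨k, a - 1, B, by omega, by omega, ?_⟩
  rw [ssumL_idL, Nat.add_sub_cancel' ha1.le, ← hP, append_assoc, ← hB]

lemma exists_idL_or_ssumL_prefix {n : ℕ} {π : List ℕ} (hn : 1 ≤ n) (hπ : IsPermList n π)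
    (hav : AvoidsAll π) :
    ∃ A B, π = A ++ B ∧ ((∃ r, 1 ≤ r ∧ A = idL r) ∨
      ∃ r₁ r₂, 1 ≤ r₁ ∧ 1 ≤ r₂ ∧ A = ssumL (idL r₁) (idL r₂)) := by
  obtain ⟨P, S, rfl⟩ := append_of_mem (hπ.mem_iff.2 ⟨le_rfl, by omega⟩ : 1 ∈ π)
  rcases P with _ | ⟨a, P⟩
  · exact ⟨idL 1, S, rfl, Or.inl ⟨1, le_rfl, rfl⟩⟩
  · obtain ⟨r₁, r₂, B, h₁, h₂, heq⟩ := exists_ssumL_prefix hπ hav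
    exact ⟨_, B, heq, Or.inr ⟨r₁, r₂, h₁, h₂, rfl⟩⟩

/-- If a permutation of `[n]` avoids 321, 2413 and 3142, then either
`π = id_r ⊕ π'` with `1 ≤ r ≤ n` and `π'` avoiding the three patterns, or
`π = (id_{r1} ⊖ id_{r2}) ⊕ π''` with `r1, r2 ≥ 1`, `r1 + r2 ≤ n` and `π''`
avoiding the three patterns. -/
theorem avoids_decomposition_step (n : ℕ) (hn : 1 ≤ n) (π : List ℕ)
    (hπ : IsPermList n π) (hav : AvoidsAll π) :
    (∃ r π', 1 ≤ r ∧ r ≤ n ∧ IsPermList (n - r) π' ∧ AvoidsAll π' ∧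
      π = dsumL (idL r) π') ∨
    (∃ r1 r2 π'', 1 ≤ r1 ∧ 1 ≤ r2 ∧ r1 + r2 ≤ n ∧
      IsPermList (n - (r1 + r2)) π'' ∧ AvoidsAll π'' ∧
      π = dsumL (ssumL (idL r1) (idL r2)) π'') := by
  obtain ⟨A, B, rfl, ⟨r, hr, rfl⟩ | ⟨r₁, r₂, hr₁, hr₂, rfl⟩⟩ :=
    exists_idL_or_ssumL_prefix hn hπ hav
  · obtain ⟨hle, hperm, havB, heq⟩ := hπ.dsumL_decomposition (Perm.refl _) hav
    exact Or.inl ⟨r, _, hr, hle, hperm, havB, heq⟩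
  · obtain ⟨hle, hperm, havB, heq⟩ := hπ.dsumL_decomposition (isPermList_ssumL_idL r₁ r₂) hav
    exact Or.inr ⟨r₁, r₂, _, hr₁, hr₂, hle, hperm, havB, heq⟩
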